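/- Let μ₁, μ₂ < 0 and let m = (μ₂/μ₁)^(1/4). Suppose β² < μ₁·μ₂. Then there exists δ > 0 such that for all u₁, u₂ > 0: m·(μ₁·u₁³ + β·u₁·u₂²) + μ₂·u₂³ + β·u₁²·u₂ ≤ -δ·(m·u₁ + u₂)³. -/

import Mathlib

/-!
Substituting `μ₂ = μ₁ m⁴` and `y = m u₂`, the left-hand side becomes
`-a (u₁³ + y³) + β u₁ u₂ (u₁ + y)` with `a = -μ₁ m`, and `β u₁ u₂ ≤ b u₁ y` with `b = |β| / m`.
The hypothesis `β² < μ₁ μ₂` says exactly `b < a`, and the binary cubic form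
`a (x³ + y³) - b x y (x + y)` dominates `(a - b)/4 · (x + y)³` on `x + y ≥ 0`.
Finally `u₁ + m u₂` and `m u₁ + u₂` are comparable up to the factor `min m m⁻¹`.
-/

lemma cubic_form_eq (a b x y : ℝ) :
    a * (x ^ 3 + y ^ 3) - b * (x * y) * (x + y) =
      (a - b) / 4 * (x + y) ^ 3 + (3 * a + b) / 4 * (x + y) * (x - y) ^ 2 := by
  ring

lemma cubic_form_lower_bound {a b x y : ℝ} (hab : 0 ≤ 3 * a + b) (hxy : 0 ≤ x + y) :
    (a - b) / 4 * (x + y) ^ 3 ≤ a * (x ^ 3 + y ^ 3) - b * (x * y) * (x + y) := by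
  rw [cubic_form_eq]
  have : 0 ≤ (3 * a + b) / 4 * (x + y) * (x - y) ^ 2 :=
    mul_nonneg (mul_nonneg (by linarith) hxy) (sq_nonneg _)
  linarith

lemma min_inv_mul_add_le {m u₁ u₂ : ℝ} (hm : 0 < m) (hu₁ : 0 ≤ u₁) (hu₂ : 0 ≤ u₂) :
    min m m⁻¹ * (m * u₁ + u₂) ≤ u₁ + m * u₂ := by
  have h₁ : min m m⁻¹ * m * u₁ ≤ u₁ := by
    have : min m m⁻¹ * m ≤ 1 := by
      calc min m m⁻¹ * m ≤ m⁻¹ * m := by gcongr; exact min_le_right _ _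
        _ = 1 := inv_mul_cancel₀ hm.ne'
    nlinarith
  have h₂ : min m m⁻¹ * u₂ ≤ m * u₂ := by gcongr; exact min_le_left _ _
  linarith

lemma abs_div_lt_neg_mul {μ₁ μ₂ β m : ℝ} (hμ₁ : μ₁ < 0) (hm : 0 < m)
    (hμ₂ : μ₂ = μ₁ * m ^ 4) (hβ : β ^ 2 < μ₁ * μ₂) : |β| / m < -μ₁ * m := by
  rw [div_lt_iff₀ hm]
  refine abs_lt_of_sq_lt_sq ?_ (mul_pos (mul_pos (neg_pos.mpr hμ₁) hm) hm).le
  calc β ^ 2 < μ₁ * μ₂ := hβ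
    _ = (-μ₁ * m * m) ^ 2 := by rw [hμ₂]; ring

section

variable {μ₁ μ₂ β m u₁ u₂ : ℝ}

lemma coupled_cubic_eq (hμ₂ : μ₂ = μ₁ * m ^ 4) :
    m * (μ₁ * u₁ ^ 3 + β * u₁ * u₂ ^ 2) + μ₂ * u₂ ^ 3 + β * u₁ ^ 2 * u₂ =
      -(-μ₁ * m * (u₁ ^ 3 + (m * u₂) ^ 3)) + β * (u₁ * u₂) * (u₁ + m * u₂) := by
  rw [hμ₂]; ring

lemma coupled_cubic_le (hμ₁ : μ₁ < 0) (hm : 0 < m) (hμ₂ : μ₂ = μ₁ * m ^ 4)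
    (hu₁ : 0 ≤ u₁) (hu₂ : 0 ≤ u₂) :
    m * (μ₁ * u₁ ^ 3 + β * u₁ * u₂ ^ 2) + μ₂ * u₂ ^ 3 + β * u₁ ^ 2 * u₂ ≤
      -((-μ₁ * m - |β| / m) / 4 * (u₁ + m * u₂) ^ 3) := by
  have hβb : β * (u₁ * u₂) ≤ |β| / m * (u₁ * (m * u₂)) := by
    calc β * (u₁ * u₂) ≤ |β| * (u₁ * u₂) := by gcongr; exact le_abs_self β
      _ = |β| / m * (u₁ * (m * u₂)) := by field_simp
  have hform := cubic_form_lower_bound (a := -μ₁ * m) (b := |β| / m) (x := u₁) (y := m * u₂)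
    (by have := mul_pos (neg_pos.mpr hμ₁) hm; positivity) (by positivity)
  rw [coupled_cubic_eq hμ₂]
  linarith [mul_le_mul_of_nonneg_right hβb (by positivity : 0 ≤ u₁ + m * u₂)]

theorem exists_coupled_cubic_le_neg_cube (hμ₁ : μ₁ < 0) (hm : 0 < m)
    (hμ₂ : μ₂ = μ₁ * m ^ 4) (hβ : β ^ 2 < μ₁ * μ₂) :
    ∃ δ > 0, ∀ u₁ u₂ : ℝ, 0 ≤ u₁ → 0 ≤ u₂ →
      m * (μ₁ * u₁ ^ 3 + β * u₁ * u₂ ^ 2) + μ₂ * u₂ ^ 3 + β * u₁ ^ 2 * u₂ ≤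
        -δ * (m * u₁ + u₂) ^ 3 := by
  set c := (-μ₁ * m - |β| / m) / 4
  set k := min m m⁻¹
  have hc : 0 < c := by have := abs_div_lt_neg_mul hμ₁ hm hμ₂ hβ; positivity
  have hk : 0 < k := lt_min hm (inv_pos.mpr hm)
  refine ⟨c * k ^ 3, by positivity, fun u₁ u₂ hu₁ hu₂ => ?_⟩
  have hcube : (k * (m * u₁ + u₂)) ^ 3 ≤ (u₁ + m * u₂) ^ 3 :=
    pow_le_pow_left₀ (by positivity) (min_inv_mul_add_le hm hu₁ hu₂) 3
  calc _ ≤ -(c * (u₁ + m * u₂) ^ 3) := coupled_cubic_le hμ₁ hm hμ₂ hu₁ hu₂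
    _ ≤ -(c * (k * (m * u₁ + u₂)) ^ 3) := by gcongr
    _ = -(c * k ^ 3) * (m * u₁ + u₂) ^ 3 := by ring

end

theorem exists_delta_cubic_bound (μ₁ μ₂ β : ℝ) (hμ₁ : μ₁ < 0) (hμ₂ : μ₂ < 0)
    (hβ : β ^ 2 < μ₁ * μ₂) :
    ∃ δ > 0, ∀ u₁ u₂ : ℝ, 0 < u₁ → 0 < u₂ →
      (μ₂ / μ₁) ^ ((1 : ℝ) / 4) * (μ₁ * u₁ ^ 3 + β * u₁ * u₂ ^ 2) +
          μ₂ * u₂ ^ 3 + β * u₁ ^ 2 * u₂ ≤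
        -δ * ((μ₂ / μ₁) ^ ((1 : ℝ) / 4) * u₁ + u₂) ^ 3 := by
  have hq : 0 < μ₂ / μ₁ := div_pos_of_neg_of_neg hμ₂ hμ₁
  have hm4 : ((μ₂ / μ₁) ^ ((1 : ℝ) / 4)) ^ 4 = μ₂ / μ₁ := by
    rw [one_div, ← Nat.cast_ofNat, Real.rpow_inv_natCast_pow hq.le (by norm_num)]
  have hμ₂m : μ₂ = μ₁ * ((μ₂ / μ₁) ^ ((1 : ℝ) / 4)) ^ 4 := by
    rw [hm4, mul_div_cancel₀ _ hμ₁.ne]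
  obtain ⟨δ, hδ, hbound⟩ :=
    exists_coupled_cubic_le_neg_cube hμ₁ (Real.rpow_pos_of_pos hq _) hμ₂m hβ
  exact ⟨δ, hδ, fun u₁ u₂ hu₁ hu₂ => hbound u₁ u₂ hu₁.le hu₂.le⟩
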